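/- arXiv:1504.03732 — 3 statements merged into one kernel-verified Lean document; each statement's English description precedes it below -/
import Mathlib

section
/- Let T ∈ A⊗B⊗C with dim B = dim C = m be 1_A-generic and let α₀ ∈ A^* be such that T(α₀) is invertible. Then: (1) if the border rank of T equals m, the space E_{α₀}(T) = {T(α)T(α₀)^{-1} : α ∈ A^*} is commutative (all its elements pairwise commute); and (2) if E_{α₀}(T) is commutative, then E_{α₀'}(T) is commutative for every α₀' ∈ A^* such that T(α₀') is invertible. -/
open scoped BigOperators

noncomputable section

/-- A tensor in coordinates: an element of ℂ^a ⊗ ℂ^b ⊗ ℂ^c. -/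
abbrev Tensor (a b c : ℕ) : Type := Fin a → Fin b → Fin c → ℂ

/-- `T` has rank at most `r`: it is a sum of `r` simple tensors. -/
def tensorRankLE {a b c : ℕ} (T : Tensor a b c) (r : ℕ) : Prop :=
  ∃ (u : Fin r → Fin a → ℂ) (v : Fin r → Fin b → ℂ) (w : Fin r → Fin c → ℂ),
    ∀ i j k, T i j k = ∑ s, u s i * v s j * w s k

/-- The rank of a tensor. -/
def tensorRank {a b c : ℕ} (T : Tensor a b c) : ℕ :=
  sInf {r | tensorRankLE T r}

/-- The border rank of a tensor: the least `r` such that `T` is a limit of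
tensors of rank at most `r`. -/
def borderRank {a b c : ℕ} (T : Tensor a b c) : ℕ :=
  sInf {r | T ∈ closure {S : Tensor a b c | tensorRankLE S r}}

/-- The tslice (contraction) of `T` at `α ∈ A^*`, as an element of `B ⊗ C`,
identified with a matrix. -/
def tslice {a b c : ℕ} (T : Tensor a b c) (α : Fin a → ℂ) :
    Matrix (Fin b) (Fin c) ℂ :=
  Matrix.of fun j k => ∑ i, α i * T i j k

def tsliceB {a b c : ℕ} (T : Tensor a b c) (β : Fin b → ℂ) :
    Matrix (Fin a) (Fin c) ℂ :=
  Matrix.of fun i k => ∑ j, β j * T i j k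

def tsliceC {a b c : ℕ} (T : Tensor a b c) (γ : Fin c → ℂ) :
    Matrix (Fin a) (Fin b) ℂ :=
  Matrix.of fun i j => ∑ k, γ k * T i j k

/-- `T` is `1_A`-generic: `T(A^*)` contains an invertible matrix. -/
def OneAGeneric {a m : ℕ} (T : Tensor a m m) : Prop :=
  ∃ α : Fin a → ℂ, IsUnit (tslice T α)

/-- The space `E_{α₀}(T) = { T(α) T(α₀)⁻¹ : α ∈ A^* } ⊆ End(B)`. -/
def Espace {a m : ℕ} (T : Tensor a m m) (α₀ : Fin a → ℂ) :
    Set (Matrix (Fin m) (Fin m) ℂ) :=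
  {X | ∃ α : Fin a → ℂ, X = tslice T α * (tslice T α₀)⁻¹}


/-!
If `T` has rank at most `m`, its slices factor as `T(α) = V D(α) W` with `D(α)` diagonal, so
`T(α) adj(T(α₀)) T(β)` is symmetric in `α` and `β`. This is a closed condition on `T`, hence it
survives to border rank `m`, and for invertible `T(α₀)` it is exactly commutativity of
`E_{α₀}(T)`. For (2), the identity with `β = α₀'` lets `T(α₀)⁻¹` and `T(α₀')⁻¹` be exchanged
around any slice, which transports the symmetric identity from `α₀` to `α₀'`.
-/

lemma exists_tensorRankLE {a b c : ℕ} (T : Tensor a b c) : ∃ r, tensorRankLE T r := by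
  let e := (Fintype.equivFin (Fin a × Fin b × Fin c)).symm
  let δ {n : ℕ} (i : Fin n) : Fin n → ℂ := Pi.single i 1
  refine ⟨_, fun s => T (e s).1 (e s).2.1 (e s).2.2 • δ (e s).1, fun s => δ (e s).2.1,
    fun s => δ (e s).2.2, fun i j k => ?_⟩
  calc T i j k = ∑ t : Fin a × Fin b × Fin c,
        (T t.1 t.2.1 t.2.2 • δ t.1) i * δ t.2.1 j * δ t.2.2 k := by
          simp [δ, Fintype.sum_prod_type, Pi.single_apply]
    _ = _ := (e.sum_comp _).symm

lemma mem_closure_tensorRankLE_borderRank {a b c : ℕ} (T : Tensor a b c) :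
    T ∈ closure {S : Tensor a b c | tensorRankLE S (borderRank T)} := by
  obtain ⟨r, hr⟩ := exists_tensorRankLE T
  exact Nat.sInf_mem (s := {r | T ∈ closure {S : Tensor a b c | tensorRankLE S r}})
    ⟨r, subset_closure hr⟩

open Matrix

lemma tslice_eq_mul_diagonal_mul {a b c r : ℕ} (S : Tensor a b c)
    (u : Fin r → Fin a → ℂ) (v : Fin r → Fin b → ℂ) (w : Fin r → Fin c → ℂ)
    (hS : ∀ i j k, S i j k = ∑ s, u s i * v s j * w s k) (α : Fin a → ℂ) :
    tslice S α = (of fun j s => v s j) * diagonal (fun s => ∑ i, α i * u s i) *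
      of fun s k => w s k := by
  ext j k
  simp only [tslice, of_apply, hS, mul_apply, diagonal_apply, mul_ite, mul_zero,
    Finset.sum_ite_eq', Finset.mem_univ, if_true, Finset.mul_sum, Finset.sum_mul]
  rw [Finset.sum_comm]
  exact Finset.sum_congr rfl fun s _ => Finset.sum_congr rfl fun i _ => by ring

lemma mul_diagonal_mul_adjugate_mul_comm {R n : Type*} [CommRing R] [Fintype n] [DecidableEq n]
    (V W : Matrix n n R) (d₀ x y : n → R) :
    V * diagonal x * W * (V * diagonal d₀ * W).adjugate * (V * diagonal y * W) =
      V * diagonal y * W * (V * diagonal d₀ * W).adjugate * (V * diagonal x * W) := by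
  have expand : ∀ x y : n → R,
      V * diagonal x * W * (V * diagonal d₀ * W).adjugate * (V * diagonal y * W) =
        (V.det * W.det) • (V * (diagonal x * (diagonal d₀).adjugate * diagonal y) * W) := by
    intro x y
    simp only [adjugate_mul_distrib, Matrix.mul_assoc]
    rw [← Matrix.mul_assoc W, mul_adjugate, ← Matrix.mul_assoc V.adjugate, adjugate_mul]
    simp only [smul_mul, Matrix.one_mul, Matrix.mul_smul, smul_smul]
  rw [expand, expand, adjugate_diagonal]
  simp only [diagonal_mul_diagonal]
  congr 4
  ext i
  ring

lemma tslice_mul_adjugate_mul_comm_of_tensorRankLE {a m : ℕ} {S : Tensor a m m}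
    (hS : tensorRankLE S m) (α₀ α β : Fin a → ℂ) :
    tslice S α * (tslice S α₀).adjugate * tslice S β =
      tslice S β * (tslice S α₀).adjugate * tslice S α := by
  obtain ⟨u, v, w, h⟩ := hS
  simp only [tslice_eq_mul_diagonal_mul S u v w h]
  exact mul_diagonal_mul_adjugate_mul_comm _ _ _ _ _

lemma continuous_tslice {a b c : ℕ} (α : Fin a → ℂ) :
    Continuous fun S : Tensor a b c => tslice S α :=
  continuous_matrix fun _ _ => by
    simp only [tslice, of_apply]
    fun_prop

lemma tslice_mul_adjugate_mul_comm_of_mem_closure {a m : ℕ} {T : Tensor a m m}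
    (hT : T ∈ closure {S : Tensor a m m | tensorRankLE S m}) (α₀ α β : Fin a → ℂ) :
    tslice T α * (tslice T α₀).adjugate * tslice T β =
      tslice T β * (tslice T α₀).adjugate * tslice T α := by
  have hcont : ∀ γ δ : Fin a → ℂ,
      Continuous fun S : Tensor a m m => tslice S γ * (tslice S α₀).adjugate * tslice S δ :=
    fun γ δ => ((continuous_tslice γ).matrix_mul
      (continuous_tslice α₀).matrix_adjugate).matrix_mul (continuous_tslice δ)
  exact closure_minimal (fun S hS => tslice_mul_adjugate_mul_comm_of_tensorRankLE hS α₀ α β)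
    (isClosed_eq (hcont α β) (hcont β α)) hT

lemma commute_mul_units_inv_iff {M : Type*} [Monoid M] (u : Mˣ) (x y : M) :
    x * ↑u⁻¹ * (y * ↑u⁻¹) = y * ↑u⁻¹ * (x * ↑u⁻¹) ↔ x * ↑u⁻¹ * y = y * ↑u⁻¹ * x := by
  simp only [← mul_assoc, Units.mul_left_inj]

lemma mul_units_inv_mul_comm_of_eq {M ι : Type*} [Monoid M] (f : ι → M) (u v : Mˣ) {k : ι}
    (hk : f k = v) (h : ∀ i j, f i * ↑u⁻¹ * f j = f j * ↑u⁻¹ * f i) (i j : ι) :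
    f i * ↑v⁻¹ * f j = f j * ↑v⁻¹ * f i := by
  have swap : ∀ i, ↑v⁻¹ * f i * ↑u⁻¹ = ↑u⁻¹ * f i * ↑v⁻¹ := fun i => by
    have hik := h i k
    rw [hk] at hik
    calc ↑v⁻¹ * f i * ↑u⁻¹ = ↑v⁻¹ * (f i * ↑u⁻¹ * ↑v) * ↑v⁻¹ := by
          simp only [mul_assoc, Units.mul_inv, mul_one]
      _ = ↑v⁻¹ * (↑v * ↑u⁻¹ * f i) * ↑v⁻¹ := by rw [hik]
      _ = ↑u⁻¹ * f i * ↑v⁻¹ := by simp only [← mul_assoc, Units.inv_mul, one_mul]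
  calc f i * ↑v⁻¹ * f j = f i * (↑v⁻¹ * f j * ↑u⁻¹) * ↑u := by
        simp only [mul_assoc, Units.inv_mul, mul_one]
    _ = f i * ↑u⁻¹ * f j * ↑v⁻¹ * ↑u := by rw [swap]; simp only [mul_assoc]
    _ = f j * ↑u⁻¹ * f i * ↑v⁻¹ * ↑u := by rw [h]
    _ = f j * (↑v⁻¹ * f i * ↑u⁻¹) * ↑u := by rw [swap]; simp only [mul_assoc]
    _ = f j * ↑v⁻¹ * f i := by simp only [mul_assoc, Units.inv_mul, mul_one]

lemma espace_comm_iff {a m : ℕ} (T : Tensor a m m) (α₀ : Fin a → ℂ)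
    (u : (Matrix (Fin m) (Fin m) ℂ)ˣ) (hu : tslice T α₀ = u) :
    (∀ X ∈ Espace T α₀, ∀ Y ∈ Espace T α₀, X * Y = Y * X) ↔
      ∀ α β, tslice T α * (↑u⁻¹ : Matrix (Fin m) (Fin m) ℂ) * tslice T β =
        tslice T β * (↑u⁻¹ : Matrix (Fin m) (Fin m) ℂ) * tslice T α := by
  simp only [Espace, hu, ← coe_units_inv]
  constructor
  · exact fun h α β => (commute_mul_units_inv_iff u _ _).1 (h _ ⟨α, rfl⟩ _ ⟨β, rfl⟩)
  · rintro h _ ⟨α, rfl⟩ _ ⟨β, rfl⟩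
    exact (commute_mul_units_inv_iff u _ _).2 (h α β)

theorem stmt0_general {a m : ℕ} (T : Tensor a m m)
    (α₀ : Fin a → ℂ) (h₀ : IsUnit (tslice T α₀)) :
    (borderRank T = m →
      ∀ X ∈ Espace T α₀, ∀ Y ∈ Espace T α₀, X * Y = Y * X) ∧
    ((∀ X ∈ Espace T α₀, ∀ Y ∈ Espace T α₀, X * Y = Y * X) →
      ∀ α₀' : Fin a → ℂ, IsUnit (tslice T α₀') →
        ∀ X ∈ Espace T α₀', ∀ Y ∈ Espace T α₀', X * Y = Y * X) := by
  rw [espace_comm_iff T α₀ h₀.unit h₀.unit_spec]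
  refine ⟨fun hbr α β => ?_, fun hcomm α₀' h₀' => ?_⟩
  · have hT := mem_closure_tensorRankLE_borderRank T
    rw [hbr] at hT
    rw [coe_units_inv, h₀.unit_spec, inv_def]
    simp only [Matrix.mul_smul, Matrix.smul_mul,
      tslice_mul_adjugate_mul_comm_of_mem_closure hT α₀ α β]
  · rw [espace_comm_iff T α₀' h₀'.unit h₀'.unit_spec]
    exact mul_units_inv_mul_comm_of_eq (tslice T) _ _ h₀'.unit_spec hcomm

/-- (Lemma 2.8 / `lem:com` in Landsberg–Michałek, "Abelian Tensors".)
(1) If `R̲(T) = m` then `E_{α₀}(T)` is commutative;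
(2) if `E_{α₀}(T)` is commutative then so is `E_{α₀'}(T)` for every `α₀'`
with `T(α₀')` invertible. -/
theorem stmt0 {a m : ℕ} (T : Tensor a m m) (hgen : OneAGeneric T)
    (α₀ : Fin a → ℂ) (h₀ : IsUnit (tslice T α₀)) :
    (borderRank T = m →
      ∀ X ∈ Espace T α₀, ∀ Y ∈ Espace T α₀, X * Y = Y * X) ∧
    ((∀ X ∈ Espace T α₀, ∀ Y ∈ Espace T α₀, X * Y = Y * X) →
      ∀ α₀' : Fin a → ℂ, IsUnit (tslice T α₀') →
        ∀ X ∈ Espace T α₀', ∀ Y ∈ Espace T α₀', X * Y = Y * X) :=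
  stmt0_general T α₀ h₀

end
end

section
/- Let T ∈ A⊗B⊗C with dim B = dim C = m be A-concise and 1_A-generic, let α₀ ∈ A^* be such that T(α₀) is invertible, and suppose E_{α₀}(T) is commutative and closed under composition. Then for every α₀' ∈ A^* with T(α₀') invertible one has the equality of subspaces E_{α₀}(T) = E_{α₀'}(T); in particular E_{α₀'}(T) is also closed under composition. -/
open scoped BigOperators

noncomputable section

/-!
Write `A₀ = T(α₀)` and `Z = T(α₀') A₀⁻¹`. Then `X ∈ E_{α₀'}(T)` iff `X Z ∈ E_{α₀}(T)`.
Being closed under composition, `E_{α₀}(T)` is a unital subalgebra of the finite-dimensional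
algebra `End(B)`, and it contains `Z`. An element of a finite-dimensional algebra that is
invertible in the ambient algebra is invertible in every subalgebra containing it (right
multiplication by it is injective, hence surjective), so `Z⁻¹ ∈ E_{α₀}(T)` and
right multiplication by `Z` preserves `E_{α₀}(T)` in both directions.
-/

theorem Subalgebra.isUnit_of_isUnit_coe {K A : Type*} [Field K] [Ring A] [Algebra K A]
    [FiniteDimensional K A] {S : Subalgebra K A} {z : S} (hz : IsUnit (z : A)) : IsUnit z :=
  haveI := IsArtinianRing.of_finite K S
  IsArtinianRing.isUnit_iff_isRightRegular.mpr fun _ _ h =>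
    Subtype.ext (hz.mul_left_injective (congrArg Subtype.val h))

theorem Subalgebra.mul_mem_iff_of_isUnit {K A : Type*} [Field K] [Ring A] [Algebra K A]
    [FiniteDimensional K A] (S : Subalgebra K A) {x z : A} (hzS : z ∈ S) (hz : IsUnit z) :
    x * z ∈ S ↔ x ∈ S := by
  refine ⟨fun hxz => ?_, fun hx => S.mul_mem hx hzS⟩
  obtain ⟨w, hw⟩ := isUnit_iff_exists.mp (isUnit_of_isUnit_coe (S := S) (z := ⟨z, hzS⟩) hz)
  have hzw : z * w = 1 := congrArg Subtype.val hw.1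
  simpa [mul_assoc, hzw] using S.mul_mem hxz w.2

section Espace

variable {a b c m : ℕ}

def tsliceLinearMap (T : Tensor a b c) : (Fin a → ℂ) →ₗ[ℂ] Matrix (Fin b) (Fin c) ℂ where
  toFun := tslice T
  map_add' α β := by ext; simp [tslice, add_mul, Finset.sum_add_distrib]
  map_smul' r α := by ext; simp [tslice, Finset.mul_sum, mul_assoc]

theorem espace_eq_range (T : Tensor a m m) (α₀ : Fin a → ℂ) :
    Espace T α₀ =
      LinearMap.range (LinearMap.mulRight ℂ (tslice T α₀)⁻¹ ∘ₗ tsliceLinearMap T) := by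
  ext X
  exact exists_congr fun _ => eq_comm

theorem one_mem_espace {T : Tensor a m m} {α₀ : Fin a → ℂ} (h₀ : IsUnit (tslice T α₀)) :
    1 ∈ Espace T α₀ :=
  ⟨α₀, (Matrix.mul_nonsing_inv _ ((Matrix.isUnit_iff_isUnit_det _).mp h₀)).symm⟩

def espaceSubalgebra {T : Tensor a m m} {α₀ : Fin a → ℂ} (h₀ : IsUnit (tslice T α₀))
    (hclosed : ∀ X ∈ Espace T α₀, ∀ Y ∈ Espace T α₀, X * Y ∈ Espace T α₀) :
    Subalgebra ℂ (Matrix (Fin m) (Fin m) ℂ) :=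
  Submodule.toSubalgebra _
    (by rw [← SetLike.mem_coe, ← espace_eq_range]; exact one_mem_espace h₀)
    (fun X Y hX hY => by
      simp only [← SetLike.mem_coe, ← espace_eq_range] at hX hY ⊢
      exact hclosed X hX Y hY)

theorem mem_espaceSubalgebra {T : Tensor a m m} {α₀ : Fin a → ℂ} (h₀ : IsUnit (tslice T α₀))
    (hclosed : ∀ X ∈ Espace T α₀, ∀ Y ∈ Espace T α₀, X * Y ∈ Espace T α₀)
    {X : Matrix (Fin m) (Fin m) ℂ} : X ∈ espaceSubalgebra h₀ hclosed ↔ X ∈ Espace T α₀ :=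
  (Set.ext_iff.mp (espace_eq_range T α₀) X).symm

theorem mem_espace_iff {T : Tensor a m m} {α₀ : Fin a → ℂ} (h₀ : IsUnit (tslice T α₀))
    {X : Matrix (Fin m) (Fin m) ℂ} : X ∈ Espace T α₀ ↔ ∃ α, X * tslice T α₀ = tslice T α := by
  refine exists_congr fun α => ⟨fun h => ?_, fun h => ?_⟩
  · rw [h, Matrix.nonsing_inv_mul_cancel_right _ _ ((Matrix.isUnit_iff_isUnit_det _).mp h₀)]
  · rw [← h, Matrix.mul_nonsing_inv_cancel_right _ _ ((Matrix.isUnit_iff_isUnit_det _).mp h₀)]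

theorem mem_espace_iff_mul_mem {T : Tensor a m m} {α₀ α₀' : Fin a → ℂ}
    (h₀ : IsUnit (tslice T α₀)) (h₀' : IsUnit (tslice T α₀')) {X : Matrix (Fin m) (Fin m) ℂ} :
    X ∈ Espace T α₀' ↔ X * (tslice T α₀' * (tslice T α₀)⁻¹) ∈ Espace T α₀ := by
  rw [mem_espace_iff h₀, mem_espace_iff h₀', Matrix.mul_assoc, Matrix.mul_assoc,
    Matrix.nonsing_inv_mul _ ((Matrix.isUnit_iff_isUnit_det _).mp h₀), Matrix.mul_one]

end Espace

theorem stmt2_general {a m : ℕ} (T : Tensor a m m)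
    (α₀ : Fin a → ℂ) (h₀ : IsUnit (tslice T α₀))
    (hclosed : ∀ X ∈ Espace T α₀, ∀ Y ∈ Espace T α₀, X * Y ∈ Espace T α₀) :
    ∀ α₀' : Fin a → ℂ, IsUnit (tslice T α₀') →
      Espace T α₀ = Espace T α₀' ∧
      (∀ X ∈ Espace T α₀', ∀ Y ∈ Espace T α₀', X * Y ∈ Espace T α₀') := by
  intro α₀' h₀'
  have hZS : tslice T α₀' * (tslice T α₀)⁻¹ ∈ espaceSubalgebra h₀ hclosed :=
    (mem_espaceSubalgebra h₀ hclosed).mpr ⟨α₀', rfl⟩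
  have hZ : IsUnit (tslice T α₀' * (tslice T α₀)⁻¹) :=
    h₀'.mul (Matrix.isUnit_nonsing_inv_iff.mpr h₀)
  have heq : Espace T α₀ = Espace T α₀' := by
    ext X
    rw [mem_espace_iff_mul_mem h₀ h₀', ← mem_espaceSubalgebra h₀ hclosed,
      ← mem_espaceSubalgebra h₀ hclosed, Subalgebra.mul_mem_iff_of_isUnit _ hZS hZ]
  exact ⟨heq, heq ▸ hclosed⟩

/-- (Proposition `cor:equal`.) If `T` is `A`-concise, `1_A`-generic and
`E_{α₀}(T)` is commutative and closed under composition, then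
`E_{α₀}(T) = E_{α₀'}(T)` for every `α₀'` with `T(α₀')` invertible; in
particular `E_{α₀'}(T)` is also closed under composition. -/
theorem stmt2 {a m : ℕ} (T : Tensor a m m)
    (hconc : Function.Injective (tslice T))
    (hgen : OneAGeneric T)
    (α₀ : Fin a → ℂ) (h₀ : IsUnit (tslice T α₀))
    (hcomm : ∀ X ∈ Espace T α₀, ∀ Y ∈ Espace T α₀, X * Y = Y * X)
    (hclosed : ∀ X ∈ Espace T α₀, ∀ Y ∈ Espace T α₀, X * Y ∈ Espace T α₀) :
    ∀ α₀' : Fin a → ℂ, IsUnit (tslice T α₀') →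
      Espace T α₀ = Espace T α₀' ∧
      (∀ X ∈ Espace T α₀', ∀ Y ∈ Espace T α₀', X * Y ∈ Espace T α₀') :=
  stmt2_general T α₀ h₀ hclosed

end
end

section
/- Let T ∈ A⊗B⊗C = ℂ^m⊗ℂ^m⊗ℂ^m be 1_A-generic and 1_B-generic and satisfy Strassen's A-equations, i.e. for some (equivalently any) α₀ ∈ A^* with T(α₀) invertible the space E_{α₀}(T) is commutative. Then T is isomorphic to a partially symmetric tensor: there exist invertible linear maps g_A ∈ GL(A), g_B ∈ GL(B), g_C ∈ GL(C) such that (g_A⊗g_B⊗g_C)(T), written with coordinates t^{ijk}, satisfies t^{ijk} = t^{jik} for all i,j,k (i.e. it lies in S²ℂ^m⊗ℂ^m). If moreover T is also 1_C-generic (hence 1-generic), then the maps can be chosen so that the resulting tensor is fully symmetric, lying in S³ℂ^m. -/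
open scoped BigOperators

noncomputable section

/-- The action of a triple of linear maps `(g_A, g_B, g_C)` on a tensor. -/
def actT {a b c : ℕ} (gA : Matrix (Fin a) (Fin a) ℂ) (gB : Matrix (Fin b) (Fin b) ℂ)
    (gC : Matrix (Fin c) (Fin c) ℂ) (T : Tensor a b c) : Tensor a b c :=
  fun i j k => ∑ i', ∑ j', ∑ k', gA i i' * gB j j' * gC k k' * T i' j' k'

/-! Put `M₀ = T(α₀)` and `G = (T(β) M₀⁻¹)⁻¹`. The tensor `(G ⊗ 1 ⊗ M₀⁻ᵀ) T` has `A`-slices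
`Z_p = T(G_p) M₀⁻¹ ∈ E_{α₀}(T)`, and its `β`-slice is the identity: `β ᵥ* Z_q = e_q`. Hence
`Z_p(q, ·) = β ᵥ* (Z_q Z_p)`, which is symmetric in `p, q` because the `Z_p` commute. If also
`T(γ)` is invertible, acting further by `G T(γ)` on `C` gives the entries
`β ᵥ* (Z_q Z_p Z_j) ⬝ᵥ M₀ γ`, symmetric in all three indices. -/

open Matrix

section CommutingFamily

variable {R n : Type*} [CommRing R] [Fintype n] [DecidableEq n]
  {Z : n → Matrix n n R} {β : n → R}

theorem apply_eq_vecMul_mul (hβ : ∀ q, β ᵥ* Z q = (1 : Matrix n n R) q) (p q : n) :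
    Z p q = β ᵥ* (Z q * Z p) := by
  rw [← vecMul_vecMul, hβ, ← mul_apply_eq_vecMul, one_mul]

theorem apply_comm_of_commute (hβ : ∀ q, β ᵥ* Z q = (1 : Matrix n n R) q)
    (hZ : ∀ p q, Commute (Z p) (Z q)) (p q : n) : Z p q = Z q p := by
  rw [apply_eq_vecMul_mul hβ, apply_eq_vecMul_mul hβ q, (hZ q p).eq]

theorem dotProduct_mulVec_comm_of_commute (hβ : ∀ q, β ᵥ* Z q = (1 : Matrix n n R) q)
    (hZ : ∀ p q, Commute (Z p) (Z q)) (γ : n → R) (p q j : n) :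
    Z p q ⬝ᵥ (Z j *ᵥ γ) = Z p j ⬝ᵥ (Z q *ᵥ γ) := by
  have triple : ∀ q j, Z p q ⬝ᵥ (Z j *ᵥ γ) = β ᵥ* (Z q * Z p * Z j) ⬝ᵥ γ := fun q j => by
    rw [dotProduct_mulVec, apply_eq_vecMul_mul hβ, vecMul_vecMul]
  rw [triple, triple, (hZ q p).eq, mul_assoc, (hZ q j).eq, ← mul_assoc, (hZ p j).eq]

end CommutingFamily

section Slices

variable {a b c : ℕ} (T : Tensor a b c)

theorem actT_apply (gA : Matrix (Fin a) (Fin a) ℂ) (gB : Matrix (Fin b) (Fin b) ℂ)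
    (gC : Matrix (Fin c) (Fin c) ℂ) (p : Fin a) :
    (actT gA gB gC T p : Matrix (Fin b) (Fin c) ℂ) = gB * tslice T (gA p) * gCᵀ := by
  ext j k
  simp only [actT, tslice, mul_apply, of_apply, transpose_apply, Finset.mul_sum, Finset.sum_mul]
  conv_lhs => rw [Finset.sum_comm]
  conv_rhs => rw [Finset.sum_comm]
  refine Finset.sum_congr rfl fun j' _ => ?_
  rw [Finset.sum_comm]
  exact Finset.sum_congr rfl fun _ _ => Finset.sum_congr rfl fun _ _ => by ring

theorem vecMul_tslice (α : Fin a → ℂ) (β : Fin b → ℂ) :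
    β ᵥ* tslice T α = α ᵥ* tsliceB T β := by
  ext k
  simp only [vecMul, dotProduct, tslice, tsliceB, of_apply, Finset.mul_sum]
  rw [Finset.sum_comm]
  exact Finset.sum_congr rfl fun _ _ => Finset.sum_congr rfl fun _ _ => by ring

theorem tslice_mulVec (α : Fin a → ℂ) (γ : Fin c → ℂ) :
    tslice T α *ᵥ γ = α ᵥ* tsliceC T γ := by
  ext j
  simp only [mulVec, vecMul, dotProduct, tslice, tsliceC, of_apply, Finset.mul_sum, Finset.sum_mul]
  rw [Finset.sum_comm]
  exact Finset.sum_congr rfl fun _ _ => Finset.sum_congr rfl fun _ _ => by ring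

end Slices

/-- (Proposition `surpriseprop`.) A `1_A`- and `1_B`-generic tensor satisfying
Strassen's `A`-equations is isomorphic (under `GL(A) × GL(B) × GL(C)`) to a
tensor in `S²ℂ^m ⊗ ℂ^m`; if moreover it is `1_C`-generic, it is isomorphic to
a tensor in `S³ℂ^m`. -/
theorem stmt11 {m : ℕ} (T : Tensor m m m)
    (hA : OneAGeneric T)
    (hB : ∃ β : Fin m → ℂ, IsUnit (tsliceB T β))
    (hstr : ∀ α₀ : Fin m → ℂ, IsUnit (tslice T α₀) →
      ∀ X ∈ Espace T α₀, ∀ Y ∈ Espace T α₀, X * Y = Y * X) :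
    (∃ gA gB gC : Matrix (Fin m) (Fin m) ℂ,
      IsUnit gA ∧ IsUnit gB ∧ IsUnit gC ∧
      ∀ i j k, actT gA gB gC T i j k = actT gA gB gC T j i k) ∧
    ((∃ γ : Fin m → ℂ, IsUnit (tsliceC T γ)) →
      ∃ gA gB gC : Matrix (Fin m) (Fin m) ℂ,
        IsUnit gA ∧ IsUnit gB ∧ IsUnit gC ∧
        (∀ i j k, actT gA gB gC T i j k = actT gA gB gC T j i k) ∧
        (∀ i j k, actT gA gB gC T i j k = actT gA gB gC T i k j)) := by
  obtain ⟨α₀, hα₀⟩ := hA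
  obtain ⟨β, hβ⟩ := hB
  set M₀ := tslice T α₀
  have hM₀ : IsUnit M₀⁻¹ := isUnit_nonsing_inv_iff.mpr hα₀
  have hM₀t : IsUnit M₀⁻¹ᵀ := (isUnit_transpose _).mpr hM₀
  set G := (tsliceB T β * M₀⁻¹)⁻¹
  have hG : IsUnit G := isUnit_nonsing_inv_iff.mpr (hβ.mul hM₀)
  set Z : Fin m → Matrix (Fin m) (Fin m) ℂ := fun p => tslice T (G p) * M₀⁻¹
  have hZβ : ∀ q, β ᵥ* Z q = (1 : Matrix (Fin m) (Fin m) ℂ) q := fun q => by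
    rw [← vecMul_vecMul, vecMul_tslice, vecMul_vecMul, ← mul_apply_eq_vecMul,
      nonsing_inv_mul _ ((isUnit_iff_isUnit_det _).mp (hβ.mul hM₀))]
  have hZ : ∀ p q, Commute (Z p) (Z q) := fun p q => hstr α₀ hα₀ _ ⟨G p, rfl⟩ _ ⟨G q, rfl⟩
  refine ⟨⟨G, 1, M₀⁻¹ᵀ, hG, isUnit_one, hM₀t, fun p q k => ?_⟩, ?_⟩
  · simp only [actT_apply, one_mul, transpose_transpose]
    exact congrFun (apply_comm_of_commute hZβ hZ p q) k
  rintro ⟨γ, hγ⟩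
  have hZγ : ∀ j, Z j *ᵥ (M₀ *ᵥ γ) = (G * tsliceC T γ) j := fun j => by
    rw [← mulVec_mulVec, mulVec_mulVec _ M₀⁻¹, nonsing_inv_mul _ ((isUnit_iff_isUnit_det _).mp hα₀),
      one_mulVec, tslice_mulVec, mul_apply_eq_vecMul]
  have hslice : ∀ p q j, actT G 1 (G * tsliceC T γ * M₀⁻¹ᵀ) T p q j =
      Z p q ⬝ᵥ (Z j *ᵥ (M₀ *ᵥ γ)) := fun p q j => by
    rw [actT_apply, one_mul, transpose_mul, transpose_transpose, ← mul_assoc, hZγ]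
    rfl
  refine ⟨G, 1, _, hG, isUnit_one, (hG.mul hγ).mul hM₀t, fun p q j => ?_, fun p q j => ?_⟩
  · rw [hslice, hslice, apply_comm_of_commute hZβ hZ p q]
  · rw [hslice, hslice, dotProduct_mulVec_comm_of_commute hZβ hZ]

end
end
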